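/- Let X, Y ∈ ℂ^{D×r}, let P be the orthogonal projection matrix onto the column space of X (the unique Hermitian idempotent matrix whose range equals the column space of X), and let R be a unitary r×r matrix attaining min_{R' unitary} ‖X − Y R'‖_F. Then ‖X·(X − Y R)^H‖_F² ≤ (1/8)·‖X X^H − Y Y^H‖_F² + (3 + 1/(2(√2 − 1)))·‖(X X^H − Y Y^H)·P‖_F². -/

import Mathlib

/-!
Put `Z = Y R`, so that `Y Yᴴ = Z Zᴴ`, and split `Z = P Z + (1 - P) Z`. Optimality of `R` makes
`W = Xᴴ Z = Xᴴ (P Z)` positive semidefinite: otherwise a unitary that only rotates the phase of one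
vector would decrease `‖X - Y R‖`. Pythagoras for the projection `P` splits the three norms in the
claim into a part inside the column space of `X`, measured by `m = ‖X Xᴴ - P Z (P Z)ᴴ‖`, and the
cross terms `v = ‖P Z ((1 - P) Z)ᴴ‖`, `w = ‖(1 - P) Z ((1 - P) Z)ᴴ‖`.
Inside the column space, writing `Xᴴ X = N + W` and `(P Z)ᴴ (P Z) = K + W` gives
`m² = ‖N‖² + ‖K‖² + 2 ⟨W, N + K⟩` with `⟨W, N + K⟩ ≥ 0`, hence `‖X (X - P Z)ᴴ‖² ≤ 3/2 m²` and
`‖N‖ ≤ m`. The remaining part `u = ‖X ((1 - P) Z)ᴴ‖` satisfies `u² ≤ ‖N‖ w + u v` by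
Cauchy–Schwarz, and a weighted AM–GM inequality finishes the proof.
-/

open Matrix
open scoped BigOperators ComplexOrder

/-- Frobenius norm of a complex matrix. -/
noncomputable def frobNorm {m n : ℕ} (A : Matrix (Fin m) (Fin n) ℂ) : ℝ :=
  Real.sqrt (∑ i, ∑ j, ‖A i j‖ ^ 2)

/-- Spectral norm (largest singular value) of a complex matrix, as the operator
norm of the induced map between Euclidean spaces. -/
noncomputable def specNorm {m n : ℕ} (A : Matrix (Fin m) (Fin n) ℂ) : ℝ :=
  ‖LinearMap.toContinuousLinearMap (Matrix.toEuclideanLin A)‖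

/-- The measurement map `𝒜(ρ)_k = trace (A k * ρ)` satisfies the `(s, δ)`-RIP. -/
def IsRIP {D K : ℕ} (A : Fin K → Matrix (Fin D) (Fin D) ℂ) (s : ℕ) (δ : ℝ) : Prop :=
  ∀ ρ : Matrix (Fin D) (Fin D) ℂ, ρ.rank ≤ s →
    (1 - δ) * frobNorm ρ ^ 2 ≤ ((D : ℝ) / (K : ℝ)) * ∑ k, ‖Matrix.trace (A k * ρ)‖ ^ 2 ∧
      ((D : ℝ) / (K : ℝ)) * ∑ k, ‖Matrix.trace (A k * ρ)‖ ^ 2 ≤ (1 + δ) * frobNorm ρ ^ 2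

/-- The adjoint of the measurement map: `𝒜*(e) = Σ_k e_k A_k`. -/
noncomputable def adjointMap {D K : ℕ} (A : Fin K → Matrix (Fin D) (Fin D) ℂ)
    (e : Fin K → ℝ) : Matrix (Fin D) (Fin D) ℂ :=
  ∑ k, (e k : ℂ) • A k

/-- The Wirtinger gradient `G(U) = (D/K) Σ_k (trace(A_k U Uᴴ) − ŷ_k) A_k U`. -/
noncomputable def wGrad {D K r : ℕ} (A : Fin K → Matrix (Fin D) (Fin D) ℂ)
    (yhat : Fin K → ℝ) (U : Matrix (Fin D) (Fin r) ℂ) : Matrix (Fin D) (Fin r) ℂ :=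
  ((D : ℂ) / (K : ℂ)) • ∑ k, (Matrix.trace (A k * (U * Uᴴ)) - (yhat k : ℂ)) • (A k * U)

/-- The Wirtinger Hessian quadratic form at `U` in direction `Δ`. -/
noncomputable def wHess {D K r : ℕ} (A : Fin K → Matrix (Fin D) (Fin D) ℂ)
    (yhat : Fin K → ℝ) (U Δ : Matrix (Fin D) (Fin r) ℂ) : ℝ :=
  (2 * (D : ℝ) / (K : ℝ)) * ∑ k, (‖Matrix.trace (A k * (U * Δᴴ))‖ ^ 2
      + ((Matrix.trace (A k * (U * Δᴴ))) ^ 2).re)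
    + (2 * (D : ℝ) / (K : ℝ)) *
      (Matrix.trace ((∑ k, (Matrix.trace (A k * (U * Uᴴ)) - (yhat k : ℂ)) • A k)
        * (Δ * Δᴴ))).re

/-- The function `h(δ)` from the recovery-error bound. -/
noncomputable def hfun (δ : ℝ) : ℝ :=
  (Real.sqrt 2 + Real.sqrt (82.55 - 762.54 * δ - 843.09 * δ ^ 2)) / (1.5 - 15.7 * δ)

/-- The smallest singular value `σ_r(X)`: the square root of the smallest
eigenvalue of `Xᴴ X`. -/
noncomputable def sigmaMin {D r : ℕ} (X : Matrix (Fin D) (Fin r) ℂ) : ℝ :=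
  Real.sqrt (⨅ i : Fin r, (Matrix.isHermitian_conjTranspose_mul_self X).eigenvalues i)

open scoped InnerProductSpace

noncomputable def frobInner {m n : ℕ} (A B : Matrix (Fin m) (Fin n) ℂ) : ℝ :=
  (trace (Aᴴ * B)).re

def frobVec {m n : ℕ} (A : Matrix (Fin m) (Fin n) ℂ) : EuclideanSpace ℂ (Fin m × Fin n) :=
  WithLp.toLp 2 (Function.uncurry A)

section Frobenius

variable {m n k : ℕ}

lemma frobNorm_eq_norm (A : Matrix (Fin m) (Fin n) ℂ) : frobNorm A = ‖frobVec A‖ := by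
  rw [EuclideanSpace.norm_eq, frobNorm, Fintype.sum_prod_type]
  rfl

lemma frobInner_eq_re_inner (A B : Matrix (Fin m) (Fin n) ℂ) :
    frobInner A B = RCLike.re ⟪frobVec A, frobVec B⟫_ℂ := by
  rw [frobInner, EuclideanSpace.inner_eq_star_dotProduct, trace, dotProduct,
    Fintype.sum_prod_type, Finset.sum_comm]
  simp [mul_apply, mul_comm, frobVec]
  rfl

lemma frobNorm_nonneg (A : Matrix (Fin m) (Fin n) ℂ) : 0 ≤ frobNorm A := Real.sqrt_nonneg _

lemma frobNorm_sq (A : Matrix (Fin m) (Fin n) ℂ) : frobNorm A ^ 2 = frobInner A A := by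
  rw [frobNorm_eq_norm, frobInner_eq_re_inner, ← inner_self_eq_norm_sq (𝕜 := ℂ)]

lemma frobNorm_add_sq (A B : Matrix (Fin m) (Fin n) ℂ) :
    frobNorm (A + B) ^ 2 = frobNorm A ^ 2 + 2 * frobInner A B + frobNorm B ^ 2 := by
  simp only [frobNorm_eq_norm, frobInner_eq_re_inner]
  exact norm_add_sq (𝕜 := ℂ) (frobVec A) (frobVec B)

lemma frobNorm_sub_sq (A B : Matrix (Fin m) (Fin n) ℂ) :
    frobNorm (A - B) ^ 2 = frobNorm A ^ 2 - 2 * frobInner A B + frobNorm B ^ 2 := by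
  simp only [frobNorm_eq_norm, frobInner_eq_re_inner]
  exact norm_sub_sq (𝕜 := ℂ) (frobVec A) (frobVec B)

lemma frobInner_le (A B : Matrix (Fin m) (Fin n) ℂ) :
    frobInner A B ≤ frobNorm A * frobNorm B := by
  simp only [frobNorm_eq_norm, frobInner_eq_re_inner]
  exact re_inner_le_norm (𝕜 := ℂ) _ _

lemma frobInner_comm (A B : Matrix (Fin m) (Fin n) ℂ) : frobInner A B = frobInner B A := by
  simp only [frobInner_eq_re_inner]
  rw [← inner_conj_symm, RCLike.conj_re]

lemma frobInner_add_left (A B C : Matrix (Fin m) (Fin n) ℂ) :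
    frobInner (A + B) C = frobInner A C + frobInner B C := by
  simp [frobInner, Matrix.add_mul]

lemma frobInner_add_right (A B C : Matrix (Fin m) (Fin n) ℂ) :
    frobInner A (B + C) = frobInner A B + frobInner A C := by
  simp [frobInner, Matrix.mul_add]

lemma frobInner_eq_sub_add (A B C : Matrix (Fin m) (Fin n) ℂ) :
    frobInner A C = frobInner (A - B) C + frobInner B C := by
  rw [← frobInner_add_left, sub_add_cancel]

lemma frobNorm_neg (A : Matrix (Fin m) (Fin n) ℂ) : frobNorm (-A) = frobNorm A := by
  simp [frobNorm]

lemma frobNorm_conjTranspose (A : Matrix (Fin m) (Fin n) ℂ) : frobNorm Aᴴ = frobNorm A := by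
  simp only [frobNorm, conjTranspose_apply, norm_star]
  rw [Finset.sum_comm]

lemma frobNorm_mul_conjTranspose_comm (A B : Matrix (Fin m) (Fin n) ℂ) :
    frobNorm (A * Bᴴ) = frobNorm (B * Aᴴ) := by
  rw [← frobNorm_conjTranspose, conjTranspose_mul, conjTranspose_conjTranspose]

lemma frobInner_mul_conjTranspose (A B : Matrix (Fin m) (Fin n) ℂ)
    (C E : Matrix (Fin m) (Fin k) ℂ) :
    frobInner (A * Bᴴ) (C * Eᴴ) = frobInner (Aᴴ * C)ᴴ (Eᴴ * B) := by
  simp only [frobInner, conjTranspose_mul, conjTranspose_conjTranspose, ← Matrix.mul_assoc]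
  rw [Matrix.mul_assoc, Matrix.mul_assoc, trace_mul_comm]
  simp only [Matrix.mul_assoc]

lemma frobNorm_sq_mul_conjTranspose (X E : Matrix (Fin m) (Fin n) ℂ) :
    frobNorm (X * Eᴴ) ^ 2 = frobInner (Xᴴ * X) (Eᴴ * E) := by
  rw [frobNorm_sq, frobInner_mul_conjTranspose, (isHermitian_conjTranspose_mul_self X).eq]

lemma frobNorm_mul_conjTranspose_self (X : Matrix (Fin m) (Fin n) ℂ) :
    frobNorm (X * Xᴴ) = frobNorm (Xᴴ * X) := by
  rw [← sq_eq_sq₀ (frobNorm_nonneg _) (frobNorm_nonneg _), frobNorm_sq_mul_conjTranspose,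
    frobNorm_sq]

lemma frobNorm_mul_unitary (Z : Matrix (Fin m) (Fin n) ℂ) {V : Matrix (Fin n) (Fin n) ℂ}
    (hV : Vᴴ * V = 1) : frobNorm (Z * V) = frobNorm Z := by
  have hV' : V * Vᴴ = 1 := mul_eq_one_comm.mp hV
  rw [← sq_eq_sq₀ (frobNorm_nonneg _) (frobNorm_nonneg _), frobNorm_sq, frobNorm_sq, frobInner,
    frobInner, conjTranspose_mul, Matrix.mul_assoc, trace_mul_comm]
  simp only [Matrix.mul_assoc, hV', Matrix.mul_one]

lemma frobInner_conjTranspose_mul_self_nonneg {W : Matrix (Fin n) (Fin n) ℂ}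
    (hW : W.PosSemidef) (E : Matrix (Fin m) (Fin n) ℂ) : 0 ≤ frobInner W (Eᴴ * E) := by
  rw [frobInner, hW.isHermitian.eq, ← Matrix.mul_assoc, trace_mul_comm, ← Matrix.mul_assoc]
  exact (Complex.nonneg_iff.mp (hW.mul_mul_conjTranspose_same E).trace_nonneg).1

end Frobenius

section Procrustes

variable {m n : ℕ}

lemma Complex.nonneg_of_forall_re_mul_le {s : ℂ}
    (h : ∀ c : ℂ, ‖c‖ = 1 → (c * s).re ≤ s.re) : 0 ≤ s := by
  rcases eq_or_ne s 0 with rfl | hs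
  · rfl
  have hs' : (‖s‖ : ℂ) ≠ 0 := by simpa using hs
  have key := h (starRingEnd ℂ s / ‖s‖) (by simp [hs])
  rw [div_mul_eq_mul_div, Complex.conj_mul', sq, mul_div_cancel_right₀ _ hs',
    Complex.ofReal_re] at key
  exact Complex.re_eq_norm.mp (le_antisymm (Complex.re_le_norm s) key)

lemma Matrix.posSemidef_of_forall_dotProduct_mulVec_nonneg {W : Matrix (Fin n) (Fin n) ℂ}
    (h : ∀ v, 0 ≤ star v ⬝ᵥ (W *ᵥ v)) : W.PosSemidef := by
  rw [← isPositive_toEuclideanLin_iff, LinearMap.isPositive_iff_complex]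
  intro x
  have hx := h (WithLp.ofLp x)
  have hreal : star (star (WithLp.ofLp x) ⬝ᵥ (W *ᵥ WithLp.ofLp x)) =
      star (WithLp.ofLp x) ⬝ᵥ (W *ᵥ WithLp.ofLp x) :=
    Complex.conj_eq_iff_im.mpr (Complex.nonneg_iff.mp hx).2.symm
  have hinner : ⟪toEuclideanLin W x, x⟫_ℂ = star (WithLp.ofLp x) ⬝ᵥ (W *ᵥ WithLp.ofLp x) := by
    rw [EuclideanSpace.inner_eq_star_dotProduct, ofLp_toLpLin, toLin'_apply, dotProduct_star,
      dotProduct_comm, hreal]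
  rw [hinner]
  exact ⟨Complex.conj_eq_iff_re.mp hreal, (Complex.nonneg_iff.mp hx).1⟩

-- The matrix acts as the phase `c` on `v` and as the identity on `v`'s orthogonal complement.
lemma conjTranspose_mul_self_one_add_smul_vecMulVec {v : Fin n → ℂ} (hv : v ≠ 0) {c : ℂ}
    (hc : ‖c‖ = 1) :
    (1 + ((c - 1) / (star v ⬝ᵥ v)) • vecMulVec v (star v))ᴴ *
      (1 + ((c - 1) / (star v ⬝ᵥ v)) • vecMulVec v (star v)) = 1 := by
  set ν := star v ⬝ᵥ v
  have hν : ν ≠ 0 := dotProduct_star_self_eq_zero.not.mpr hv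
  have hνν : star ν = ν := (star_dotProduct v v).symm
  have hcc : star c * c = 1 := by
    rw [Complex.star_def, Complex.conj_mul', hc]
    norm_num
  have hsq : vecMulVec v (star v) * vecMulVec v (star v) = ν • vecMulVec v (star v) := by
    rw [vecMulVec_mul_vecMulVec, vecMulVec_smul]
  have hQ : (vecMulVec v (star v))ᴴ = vecMulVec v (star v) := by
    rw [conjTranspose_vecMulVec, star_star]
  have hcoef : star ((c - 1) / ν) + (c - 1) / ν + star ((c - 1) / ν) * ((c - 1) / ν) * ν = 0 := by
    rw [star_div₀, hνν, star_sub, star_one]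
    field_simp
    linear_combination hcc
  rw [conjTranspose_add, conjTranspose_one, conjTranspose_smul, hQ, Matrix.add_mul, Matrix.mul_add,
    Matrix.mul_add, smul_mul_smul, hsq, smul_smul, Matrix.one_mul, Matrix.mul_one,
    Matrix.one_mul]
  linear_combination (norm := module) hcoef • vecMulVec v (star v)

lemma posSemidef_of_forall_re_trace_mul_le {W : Matrix (Fin n) (Fin n) ℂ}
    (h : ∀ V : Matrix (Fin n) (Fin n) ℂ, Vᴴ * V = 1 → (trace (W * V)).re ≤ (trace W).re) :
    W.PosSemidef := by
  refine posSemidef_of_forall_dotProduct_mulVec_nonneg fun v => ?_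
  rcases eq_or_ne v 0 with rfl | hv
  · simp
  set s := star v ⬝ᵥ (W *ᵥ v)
  set ν := star v ⬝ᵥ v
  have hν : ν ≠ 0 := dotProduct_star_self_eq_zero.not.mpr hv
  have hquot : 0 ≤ s / ν := by
    refine Complex.nonneg_of_forall_re_mul_le fun c hc => ?_
    have key := h _ (conjTranspose_mul_self_one_add_smul_vecMulVec hv hc)
    rw [Matrix.mul_add, Matrix.mul_one, trace_add, Matrix.mul_smul, trace_smul, mul_vecMulVec,
      trace_vecMulVec, dotProduct_comm (W *ᵥ v), smul_eq_mul,
      show (c - 1) / ν * s = c * (s / ν) - s / ν by ring] at key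
    simp only [Complex.add_re, Complex.sub_re] at key
    linarith
  calc 0 ≤ ν * (s / ν) := mul_nonneg (dotProduct_star_self_nonneg v) hquot
    _ = s := mul_div_cancel₀ s hν

lemma posSemidef_conjTranspose_mul_of_forall_frobNorm_sub_le {X Y : Matrix (Fin m) (Fin n) ℂ}
    {R : Matrix (Fin n) (Fin n) ℂ} (hR : Rᴴ * R = 1)
    (hmin : ∀ R' : Matrix (Fin n) (Fin n) ℂ, R'ᴴ * R' = 1 →
      frobNorm (X - Y * R) ≤ frobNorm (X - Y * R')) :
    (Xᴴ * (Y * R)).PosSemidef := by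
  refine posSemidef_of_forall_re_trace_mul_le fun V hV => ?_
  have hRV : (R * V)ᴴ * (R * V) = 1 := by
    rw [conjTranspose_mul, Matrix.mul_assoc, ← Matrix.mul_assoc Rᴴ, hR, Matrix.one_mul, hV]
  have h := pow_le_pow_left₀ (frobNorm_nonneg _) (hmin _ hRV) 2
  rw [frobNorm_sub_sq, frobNorm_sub_sq, ← Matrix.mul_assoc, frobNorm_mul_unitary _ hV] at h
  simp only [frobInner, ← Matrix.mul_assoc] at h ⊢
  linarith

end Procrustes

section Estimates

variable {m n : ℕ}

lemma frobNorm_sq_mul_conjTranspose_sub_mul_conjTranspose (X Z : Matrix (Fin m) (Fin n) ℂ) :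
    frobNorm (X * Xᴴ - Z * Zᴴ) ^ 2 =
      frobNorm (Xᴴ * X) ^ 2 - 2 * frobNorm (Xᴴ * Z) ^ 2 + frobNorm (Zᴴ * Z) ^ 2 := by
  rw [frobNorm_sub_sq, frobNorm_mul_conjTranspose_self, frobNorm_mul_conjTranspose_self,
    frobInner_mul_conjTranspose, conjTranspose_mul, conjTranspose_conjTranspose, ← frobNorm_sq,
    ← frobNorm_conjTranspose (Zᴴ * X), conjTranspose_mul, conjTranspose_conjTranspose]

lemma conjTranspose_sub_mul_sub_of_isHermitian {X Z : Matrix (Fin m) (Fin n) ℂ}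
    (hW : (Xᴴ * Z).IsHermitian) :
    (X - Z)ᴴ * (X - Z) = (Xᴴ * X - Xᴴ * Z) + (Zᴴ * Z - Xᴴ * Z) := by
  have hZX : Zᴴ * X = Xᴴ * Z := by rw [← hW.eq, conjTranspose_mul, conjTranspose_conjTranspose]
  rw [conjTranspose_sub, Matrix.sub_mul, Matrix.mul_sub, Matrix.mul_sub, hZX]
  abel

lemma frobNorm_sq_mul_conjTranspose_sub_mul_conjTranspose_of_isHermitian
    {X Z : Matrix (Fin m) (Fin n) ℂ} (hW : (Xᴴ * Z).IsHermitian) :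
    frobNorm (X * Xᴴ - Z * Zᴴ) ^ 2 = frobNorm (Xᴴ * X - Xᴴ * Z) ^ 2
      + frobNorm (Zᴴ * Z - Xᴴ * Z) ^ 2 + 2 * frobInner (Xᴴ * Z) ((X - Z)ᴴ * (X - Z)) := by
  have hX := frobNorm_add_sq (Xᴴ * X - Xᴴ * Z) (Xᴴ * Z)
  have hZ := frobNorm_add_sq (Zᴴ * Z - Xᴴ * Z) (Xᴴ * Z)
  rw [sub_add_cancel] at hX hZ
  rw [frobNorm_sq_mul_conjTranspose_sub_mul_conjTranspose,
    conjTranspose_sub_mul_sub_of_isHermitian hW, frobInner_add_right,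
    frobInner_comm (Xᴴ * Z), frobInner_comm (Xᴴ * Z), hX, hZ]
  ring

lemma frobNorm_conjTranspose_mul_sub_le {X Z : Matrix (Fin m) (Fin n) ℂ}
    (hW : (Xᴴ * Z).PosSemidef) : frobNorm (Xᴴ * X - Xᴴ * Z) ≤ frobNorm (X * Xᴴ - Z * Zᴴ) := by
  refine le_of_pow_le_pow_left₀ two_ne_zero (frobNorm_nonneg _) ?_
  rw [frobNorm_sq_mul_conjTranspose_sub_mul_conjTranspose_of_isHermitian hW.isHermitian]
  nlinarith [sq_nonneg (frobNorm (Zᴴ * Z - Xᴴ * Z)),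
    frobInner_conjTranspose_mul_self_nonneg hW (X - Z)]

lemma frobNorm_sq_mul_conjTranspose_sub_le {X Z : Matrix (Fin m) (Fin n) ℂ}
    (hW : (Xᴴ * Z).PosSemidef) :
    frobNorm (X * (X - Z)ᴴ) ^ 2 ≤ 3 / 2 * frobNorm (X * Xᴴ - Z * Zᴴ) ^ 2 := by
  have hCS := frobInner_le (Xᴴ * X - Xᴴ * Z) (Zᴴ * Z - Xᴴ * Z)
  have hg := frobInner_conjTranspose_mul_self_nonneg hW (X - Z)
  rw [conjTranspose_sub_mul_sub_of_isHermitian hW.isHermitian] at hg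
  rw [frobNorm_sq_mul_conjTranspose_sub_mul_conjTranspose_of_isHermitian hW.isHermitian,
    frobNorm_sq_mul_conjTranspose, frobInner_eq_sub_add _ (Xᴴ * Z),
    conjTranspose_sub_mul_sub_of_isHermitian hW.isHermitian, frobInner_add_right, ← frobNorm_sq]
  nlinarith [sq_nonneg (frobNorm (Xᴴ * X - Xᴴ * Z) - frobNorm (Zᴴ * Z - Xᴴ * Z)),
    sq_nonneg (frobNorm (Zᴴ * Z - Xᴴ * Z))]

lemma frobNorm_sq_mul_conjTranspose_le {X Z : Matrix (Fin m) (Fin n) ℂ}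
    (hW : (Xᴴ * Z).IsHermitian) (E : Matrix (Fin m) (Fin n) ℂ) :
    frobNorm (X * Eᴴ) ^ 2 ≤
      frobNorm (Xᴴ * X - Xᴴ * Z) * frobNorm (E * Eᴴ) + frobNorm (X * Eᴴ) * frobNorm (Z * Eᴴ) := by
  have hE : frobNorm (Eᴴ * E) = frobNorm (E * Eᴴ) := by
    simpa using frobNorm_mul_conjTranspose_self Eᴴ
  have hW' : frobInner (Xᴴ * Z) (Eᴴ * E) = frobInner (X * Eᴴ) (Z * Eᴴ) := by
    rw [frobInner_mul_conjTranspose, hW.eq]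
  rw [frobNorm_sq_mul_conjTranspose, frobInner_eq_sub_add _ (Xᴴ * Z), hW', ← hE]
  exact add_le_add (frobInner_le _ _) (frobInner_le _ _)

end Estimates

section Projection

variable {m D r : ℕ} {P : Matrix (Fin D) (Fin D) ℂ} {X : Matrix (Fin D) (Fin r) ℂ}

lemma mul_eq_self_of_range_le (hPP : P * P = P)
    (h : LinearMap.range X.mulVecLin ≤ LinearMap.range P.mulVecLin) : P * X = X := by
  refine Matrix.toLin'.injective (LinearMap.ext fun v => ?_)
  obtain ⟨w, hw⟩ := h ⟨v, rfl⟩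
  simp only [mulVecLin_apply] at hw
  rw [toLin'_apply, toLin'_apply, ← mulVec_mulVec, ← hw, mulVec_mulVec, hPP]

lemma one_sub_mul_eq_zero (hPX : P * X = X) : (1 - P) * X = 0 := by
  rw [Matrix.sub_mul, Matrix.one_mul, hPX, sub_self]

lemma conjTranspose_mul_of_isHermitian (hP : P.IsHermitian) (B : Matrix (Fin D) (Fin m) ℂ) :
    Bᴴ * P = (P * B)ᴴ := by
  rw [conjTranspose_mul, hP.eq]

lemma frobNorm_sq_eq_mul_add_mul_one_sub (hP : P.IsHermitian) (hPP : P * P = P)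
    (A : Matrix (Fin m) (Fin D) ℂ) :
    frobNorm A ^ 2 = frobNorm (A * P) ^ 2 + frobNorm (A * (1 - P)) ^ 2 := by
  have horth : frobInner (A * P) (A * (1 - P)) = 0 := by
    rw [frobInner, conjTranspose_mul, hP.eq, Matrix.mul_assoc, trace_mul_comm,
      Matrix.mul_assoc, Matrix.mul_assoc, Matrix.sub_mul, hPP, Matrix.one_mul, sub_self]
    simp
  conv_lhs => rw [show A = A * P + A * (1 - P) by rw [Matrix.mul_sub, Matrix.mul_one]; abel]
  rw [frobNorm_add_sq, horth]
  ring

lemma frobNorm_sq_eq_mul_add_one_sub_mul (hP : P.IsHermitian) (hPP : P * P = P)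
    (A : Matrix (Fin D) (Fin m) ℂ) :
    frobNorm A ^ 2 = frobNorm (P * A) ^ 2 + frobNorm ((1 - P) * A) ^ 2 := by
  have h1P : (1 - P)ᴴ = 1 - P := (isHermitian_one.sub hP).eq
  rw [← frobNorm_conjTranspose A, frobNorm_sq_eq_mul_add_mul_one_sub hP hPP,
    ← frobNorm_conjTranspose (P * A), ← frobNorm_conjTranspose ((1 - P) * A), conjTranspose_mul,
    conjTranspose_mul, hP.eq, h1P]

lemma frobNorm_sq_mul_conjTranspose_sub_eq_add (hP : P.IsHermitian) (hPP : P * P = P)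
    (hPX : P * X = X) (Z : Matrix (Fin D) (Fin r) ℂ) :
    frobNorm (X * (X - Z)ᴴ) ^ 2 =
      frobNorm (X * (X - P * Z)ᴴ) ^ 2 + frobNorm (X * ((1 - P) * Z)ᴴ) ^ 2 := by
  have hP' : X * (X - Z)ᴴ * P = X * (X - P * Z)ᴴ := by
    rw [Matrix.mul_assoc, conjTranspose_mul_of_isHermitian hP, Matrix.mul_sub, hPX]
  have hQ' : X * (X - Z)ᴴ * (1 - P) = -(X * ((1 - P) * Z)ᴴ) := by
    rw [Matrix.mul_assoc, conjTranspose_mul_of_isHermitian (isHermitian_one.sub hP),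
      Matrix.mul_sub, one_sub_mul_eq_zero hPX, zero_sub, conjTranspose_neg, Matrix.mul_neg]
  rw [frobNorm_sq_eq_mul_add_mul_one_sub hP hPP, hP', hQ', frobNorm_neg]

lemma frobNorm_sq_mul_conjTranspose_sub_mul_conjTranspose_mul_eq (hP : P.IsHermitian)
    (hPP : P * P = P) (hPX : P * X = X) (Z : Matrix (Fin D) (Fin r) ℂ) :
    frobNorm ((X * Xᴴ - Z * Zᴴ) * P) ^ 2 =
      frobNorm (X * Xᴴ - P * Z * (P * Z)ᴴ) ^ 2 + frobNorm (P * Z * ((1 - P) * Z)ᴴ) ^ 2 := by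
  have hMP : (X * Xᴴ - Z * Zᴴ) * P = X * Xᴴ - Z * (P * Z)ᴴ := by
    rw [Matrix.sub_mul, Matrix.mul_assoc, Matrix.mul_assoc, conjTranspose_mul_of_isHermitian hP,
      conjTranspose_mul_of_isHermitian hP, hPX]
  have hP' : P * (X * Xᴴ - Z * (P * Z)ᴴ) = X * Xᴴ - P * Z * (P * Z)ᴴ := by
    rw [Matrix.mul_sub, ← Matrix.mul_assoc, ← Matrix.mul_assoc, hPX]
  have hQ' : (1 - P) * (X * Xᴴ - Z * (P * Z)ᴴ) = -((1 - P) * Z * (P * Z)ᴴ) := by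
    rw [Matrix.mul_sub, ← Matrix.mul_assoc, ← Matrix.mul_assoc, one_sub_mul_eq_zero hPX,
      Matrix.zero_mul, zero_sub]
  rw [hMP, frobNorm_sq_eq_mul_add_one_sub_mul hP hPP, hP', hQ', frobNorm_neg,
    frobNorm_mul_conjTranspose_comm]

lemma frobNorm_sq_mul_conjTranspose_sub_mul_conjTranspose_eq_add (hP : P.IsHermitian)
    (hPP : P * P = P) (hPX : P * X = X) (Z : Matrix (Fin D) (Fin r) ℂ) :
    frobNorm (X * Xᴴ - Z * Zᴴ) ^ 2 = frobNorm ((X * Xᴴ - Z * Zᴴ) * P) ^ 2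
      + frobNorm (P * Z * ((1 - P) * Z)ᴴ) ^ 2 + frobNorm ((1 - P) * Z * ((1 - P) * Z)ᴴ) ^ 2 := by
  have hQ' : (X * Xᴴ - Z * Zᴴ) * (1 - P) = -(Z * ((1 - P) * Z)ᴴ) := by
    have hQ := isHermitian_one.sub hP
    rw [Matrix.sub_mul, Matrix.mul_assoc, Matrix.mul_assoc, conjTranspose_mul_of_isHermitian hQ,
      conjTranspose_mul_of_isHermitian hQ, one_sub_mul_eq_zero hPX, conjTranspose_zero,
      Matrix.mul_zero, zero_sub]
  rw [frobNorm_sq_eq_mul_add_mul_one_sub hP hPP (X * Xᴴ - Z * Zᴴ), hQ', frobNorm_neg,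
    frobNorm_sq_eq_mul_add_one_sub_mul hP hPP (Z * ((1 - P) * Z)ᴴ), ← Matrix.mul_assoc,
    ← Matrix.mul_assoc, add_assoc]

end Projection

-- Weighted AM–GM: the weights make the coefficient of `w ^ 2` exactly `1 / 8`.
lemma sq_add_sq_le_of_bounds {a m n u v w : ℝ} (hn : 0 ≤ n) (ha : a ^ 2 ≤ 3 / 2 * m ^ 2)
    (hnm : n ≤ m) (hu : u ^ 2 ≤ n * w + u * v) :
    a ^ 2 + u ^ 2 ≤
      1 / 8 * (m ^ 2 + v ^ 2 + v ^ 2 + w ^ 2) + (3 + 1 / (2 * (√2 - 1))) * (m ^ 2 + v ^ 2) := by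
  have hsqrt2 : √2 ≤ 71 / 50 := by
    nlinarith [Real.sq_sqrt (show (0 : ℝ) ≤ 2 by norm_num), Real.sqrt_nonneg 2]
  have hc : 25 / 21 ≤ 1 / (2 * (√2 - 1)) := by
    rw [le_div_iff₀ (by nlinarith [Real.one_lt_sqrt_two])]
    linarith
  have huv : u * v ≤ 3 / 20 * u ^ 2 + 5 / 3 * v ^ 2 := by nlinarith [sq_nonneg (3 * u - 10 * v)]
  have hnw : n * w ≤ 40 / 17 * n ^ 2 + 17 / 160 * w ^ 2 := by
    nlinarith [sq_nonneg (80 * n - 17 * w)]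
  have hnm2 : n ^ 2 ≤ m ^ 2 := pow_le_pow_left₀ hn hnm 2
  generalize 1 / (2 * (√2 - 1)) = c at hc ⊢
  nlinarith [mul_le_mul_of_nonneg_right hc (add_nonneg (sq_nonneg m) (sq_nonneg v))]

theorem stmt_15 {D r : ℕ} (X Y : Matrix (Fin D) (Fin r) ℂ)
    (Pu : Matrix (Fin D) (Fin D) ℂ)
    (hPherm : Pu.IsHermitian) (hPidem : Pu * Pu = Pu)
    (hPrange : LinearMap.range Pu.mulVecLin = LinearMap.range X.mulVecLin)
    (R : Matrix (Fin r) (Fin r) ℂ)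
    (hRunit : Rᴴ * R = 1)
    (hRmin : ∀ R' : Matrix (Fin r) (Fin r) ℂ, R'ᴴ * R' = 1 →
      frobNorm (X - Y * R) ≤ frobNorm (X - Y * R')) :
    frobNorm (X * (X - Y * R)ᴴ) ^ 2 ≤
      1 / 8 * frobNorm (X * Xᴴ - Y * Yᴴ) ^ 2
        + (3 + 1 / (2 * (Real.sqrt 2 - 1))) * frobNorm ((X * Xᴴ - Y * Yᴴ) * Pu) ^ 2 := by
  have hYY : Y * Yᴴ = Y * R * (Y * R)ᴴ := by
    rw [conjTranspose_mul, Matrix.mul_assoc, ← Matrix.mul_assoc R, mul_eq_one_comm.mp hRunit,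
      Matrix.one_mul]
  have hPX : Pu * X = X := mul_eq_self_of_range_le hPidem hPrange.ge
  have hW : (Xᴴ * (Pu * (Y * R))).PosSemidef := by
    rw [← Matrix.mul_assoc, conjTranspose_mul_of_isHermitian hPherm, hPX]
    exact posSemidef_conjTranspose_mul_of_forall_frobNorm_sub_le hRunit hRmin
  rw [hYY, frobNorm_sq_mul_conjTranspose_sub_mul_conjTranspose_eq_add hPherm hPidem hPX,
    frobNorm_sq_mul_conjTranspose_sub_mul_conjTranspose_mul_eq hPherm hPidem hPX,
    frobNorm_sq_mul_conjTranspose_sub_eq_add hPherm hPidem hPX]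
  exact sq_add_sq_le_of_bounds (frobNorm_nonneg _) (frobNorm_sq_mul_conjTranspose_sub_le hW)
    (frobNorm_conjTranspose_mul_sub_le hW) (frobNorm_sq_mul_conjTranspose_le hW.isHermitian _)
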